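/- For every nonnegative integer m, D((5·4^m − 2)/3) = 4^m. -/

import Mathlib

/-- f m = (#1 digits) - (#0 digits) in the binary expansion of m. -/
def f (m : ℕ) : ℤ :=
  2 * ((Nat.digits 2 m).count 1 : ℤ) - ((Nat.digits 2 m).length : ℤ)

/-- Cumulated deficient binary digit sum (OEIS A268289), D 0 = 0. -/
def D (n : ℕ) : ℤ := ∑ m ∈ Finset.Icc 1 n, f m

/-!
Appending a binary digit `1` (resp. `0`) to `k ≥ 1` raises (resp. lowers) `f` by one, so
`f (2j) + f (2j+1) = 2 f j`; pairing the terms of `D (2n+1)` this way gives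
`D (2n+1) = 2 D n + 1`, hence `D (2n) = 2 D n - f n` and `D (4n+2) = 4 D n - f n + 1`,
while `f (4n+2) = f n`. The numbers `c_m = (5·4^m - 2)/3` start at `c_0 = 1` and satisfy
`c_{m+1} = 4 c_m + 2`, so `f c_m = 1` throughout and `D c_{m+1} = 4 D c_m`.
-/

lemma f_zero : f 0 = 0 := by simp [f]

lemma f_two_mul_add_one (k : ℕ) : f (2 * k + 1) = f k + 1 := by
  rw [f, Nat.digits_def' (by norm_num) (by omega),
    show (2 * k + 1) % 2 = 1 by omega, show (2 * k + 1) / 2 = k by omega]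
  simp only [List.count_cons_self, List.length_cons, f]
  push_cast
  ring

lemma f_two_mul {k : ℕ} (hk : 0 < k) : f (2 * k) = f k - 1 := by
  rw [f, Nat.digits_def' (by norm_num) (by omega),
    show 2 * k % 2 = 0 by omega, show 2 * k / 2 = k by omega]
  simp only [List.count_cons, List.length_cons, f]
  push_cast
  ring

lemma f_one : f 1 = 1 := by simpa [f_zero] using f_two_mul_add_one 0

lemma f_four_mul_add_two (n : ℕ) : f (4 * n + 2) = f n := by
  rw [show 4 * n + 2 = 2 * (2 * n + 1) by ring, f_two_mul (by omega), f_two_mul_add_one]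
  ring

lemma D_zero : D 0 = 0 := rfl

lemma D_succ (n : ℕ) : D (n + 1) = D n + f (n + 1) :=
  Finset.sum_Icc_succ_top (by omega) f

lemma D_two_mul_add_one (n : ℕ) : D (2 * n + 1) = 2 * D n + 1 := by
  induction n with
  | zero => simp [D_succ, D_zero, f_one]
  | succ n ih =>
    rw [D_succ, f_two_mul_add_one,
      show 2 * (n + 1) = 2 * n + 1 + 1 by ring, D_succ, ih,
      show 2 * n + 1 + 1 = 2 * (n + 1) by ring, f_two_mul (by omega), D_succ]
    ring

lemma D_two_mul (n : ℕ) : D (2 * n) = 2 * D n - f n := by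
  have h := D_succ (2 * n)
  rw [D_two_mul_add_one, f_two_mul_add_one] at h
  linarith

lemma D_four_mul_add_two (n : ℕ) : D (4 * n + 2) = 4 * D n - f n + 1 := by
  rw [show 4 * n + 2 = 2 * (2 * n + 1) by ring, D_two_mul, D_two_mul_add_one,
    f_two_mul_add_one]
  ring

lemma five_mul_four_pow_succ_sub_two_div_three (m : ℕ) :
    (5 * 4 ^ (m + 1) - 2) / 3 = 4 * ((5 * 4 ^ m - 2) / 3) + 2 := by
  have h : 4 ^ m % 3 = 1 := by simp [Nat.pow_mod]
  have hpos : 0 < 4 ^ m := by positivity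
  rw [pow_succ]
  omega

theorem stmt_18 (m : ℕ) : D ((5 * 4 ^ m - 2) / 3) = 4 ^ m := by
  suffices h : f ((5 * 4 ^ m - 2) / 3) = 1 ∧ D ((5 * 4 ^ m - 2) / 3) = 4 ^ m from h.2
  induction m with
  | zero => exact ⟨f_one, by simp [D_succ, D_zero, f_one]⟩
  | succ m ih =>
    rw [five_mul_four_pow_succ_sub_two_div_three, f_four_mul_add_two, D_four_mul_add_two,
      ih.1, ih.2, pow_succ]
    exact ⟨rfl, by ring⟩
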